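/- Let m ≥ 2 and N be naturals, x_1, ..., x_N ∈ ℝ nodes, w_1, ..., w_N ≥ 0 weights, P the N × (m+1) matrix with j-th row (1, x_j, x_j², ..., x_j^m), W = diag(w_1, ..., w_N), and H the (m+1) × (m+1) diagonal matrix diag(0, 0, w̄_2, ..., w̄_m) with w̄_ν > 0 for ν = 2, ..., m. If there exist indices j ≠ k with w_j > 0, w_k > 0 and x_j ≠ x_k, then the modified moment matrix Ā = Pᵀ W P + H is positive definite (in particular, nonsingular). -/

import Mathlib

/-! The quadratic form of `Pᵀ W P + H` at a coefficient vector `a` is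
`∑ j, w j * q (x j) ^ 2 + ∑ ν, w̄ ν * a ν ^ 2` with `q = ∑ ν, a ν X ^ ν`, a sum of two nonnegative
terms. If the second vanishes, `q` has degree at most one; if the first vanishes too, `q` has the
two distinct roots `x j`, `x k`, so `q = 0`, i.e. `a = 0`. -/

open Matrix Finset Polynomial

theorem eq_zero_of_sum_mul_sq_eq_zero {ι R : Type*} [Fintype ι] [Ring R] [LinearOrder R]
    [IsStrictOrderedRing R] {d v : ι → R} (hd : ∀ i, 0 ≤ d i) (h : ∑ i, d i * v i ^ 2 = 0)
    {i : ι} (hi : 0 < d i) : v i = 0 := by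
  have hterm := (sum_eq_zero_iff_of_nonneg fun i _ => mul_nonneg (hd i) (sq_nonneg (v i))).1 h i
    (mem_univ i)
  exact pow_eq_zero_iff two_ne_zero |>.1 <| (mul_eq_zero.1 hterm).resolve_left hi.ne'

namespace Matrix

theorem eq_zero_of_forall_mem_sum_mul_pow_eq_zero {R : Type*} [CommRing R] [IsDomain R] {n : ℕ}
    {v : Fin n → R} (s : Finset R) (hv : ∀ i : Fin n, #s ≤ i → v i = 0)
    (hs : ∀ t ∈ s, ∑ i, v i * t ^ (i : ℕ) = 0) : v = 0 := by
  set p : R[X] := ∑ i : Fin n, monomial i (v i)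
  have hcoeff (k : ℕ) : p.coeff k = ∑ i : Fin n, if (i : ℕ) = k then v i else 0 := by
    simp only [p, finsetSum_coeff, coeff_monomial]
  have hdeg : p.degree < #s := by
    refine (degree_lt_iff_coeff_zero p _).2 fun k hk => ?_
    rw [hcoeff]
    refine sum_eq_zero fun i _ => ?_
    split_ifs with hik
    exacts [hv i (hik ▸ hk), rfl]
  have hp : p = 0 := eq_zero_of_degree_lt_of_eval_finset_eq_zero s hdeg fun t ht => by
    simpa only [p, eval_finsetSum, eval_monomial] using hs t ht
  funext i
  simpa [Fin.val_inj, hp] using (hcoeff i).symm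

variable {m n R : Type*} [Fintype m] [Fintype n]

theorem dotProduct_diagonal_mulVec [CommSemiring R] [DecidableEq n] (d v : n → R) :
    v ⬝ᵥ (diagonal d *ᵥ v) = ∑ i, d i * v i ^ 2 := by
  simp only [dotProduct, mulVec_diagonal]
  exact sum_congr rfl fun i _ => by ring

theorem dotProduct_transpose_mul_mul_mulVec [CommSemiring R] (A : Matrix m n R)
    (B : Matrix m m R) (v : n → R) : v ⬝ᵥ ((Aᵀ * B * A) *ᵥ v) = (A *ᵥ v) ⬝ᵥ (B *ᵥ (A *ᵥ v)) := by
  rw [← mulVec_mulVec, ← mulVec_mulVec, dotProduct_mulVec, vecMul_transpose]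

theorem PosSemidef.posDef_add [CommRing R] [PartialOrder R] [StarRing R] [IsOrderedAddMonoid R]
    {A B : Matrix n n R} (hA : A.PosSemidef) (hB : B.PosSemidef)
    (h : ∀ v, star v ⬝ᵥ (A *ᵥ v) = 0 → star v ⬝ᵥ (B *ᵥ v) = 0 → v = 0) : (A + B).PosDef := by
  refine PosDef.of_dotProduct_mulVec_pos (hA.isHermitian.add hB.isHermitian) fun v hv => ?_
  rw [add_mulVec, dotProduct_add]
  have hAv := hA.dotProduct_mulVec_nonneg v
  have hBv := hB.dotProduct_mulVec_nonneg v
  refine (add_nonneg hAv hBv).lt_of_ne fun h0 => hv ?_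
  obtain ⟨hA0, hB0⟩ := (add_eq_zero_iff_of_nonneg hAv hBv).1 h0.symm
  exact h v hA0 hB0

end Matrix

theorem mmls_modified_moment_matrix_posDef_general
    (m N : ℕ)
    (x : Fin N → ℝ) (w : Fin N → ℝ) (hw : ∀ j, 0 ≤ w j)
    (P : Matrix (Fin N) (Fin (m + 1)) ℝ)
    (hP : ∀ (j : Fin N) (i : Fin (m + 1)), P j i = x j ^ (i : ℕ))
    (W : Matrix (Fin N) (Fin N) ℝ) (hW : W = Matrix.diagonal w)
    (dH : Fin (m + 1) → ℝ)
    (hd0 : ∀ i : Fin (m + 1), (i : ℕ) < 2 → dH i = 0)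
    (hdpos : ∀ i : Fin (m + 1), 2 ≤ (i : ℕ) → 0 < dH i)
    (H : Matrix (Fin (m + 1)) (Fin (m + 1)) ℝ) (hH : H = Matrix.diagonal dH)
    (hjk : ∃ j k : Fin N, j ≠ k ∧ 0 < w j ∧ 0 < w k ∧ x j ≠ x k) :
    (Pᵀ * W * P + H).PosDef := by
  subst hW hH
  have hdH (i : Fin (m + 1)) : 0 ≤ dH i :=
    (lt_or_ge (i : ℕ) 2).elim (fun hi => (hd0 i hi).ge) fun hi => (hdpos i hi).le
  have hPWP : (Pᵀ * diagonal w * P).PosSemidef := by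
    simpa only [conjTranspose_eq_transpose_of_trivial] using
      (PosSemidef.diagonal (d := w) hw).conjTranspose_mul_mul_same P
  refine hPWP.posDef_add (.diagonal (d := dH) hdH) fun v hvW hvH => ?_
  rw [star_trivial, dotProduct_transpose_mul_mul_mulVec, dotProduct_diagonal_mulVec] at hvW
  rw [star_trivial, dotProduct_diagonal_mulVec] at hvH
  have hPv (l : Fin N) : (P *ᵥ v) l = ∑ i, v i * x l ^ (i : ℕ) := by
    simp only [mulVec, dotProduct, hP, mul_comm]
  obtain ⟨j, k, -, hwj, hwk, hxjk⟩ := hjk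
  refine eq_zero_of_forall_mem_sum_mul_pow_eq_zero {x j, x k} (fun i hi => ?_) fun t ht => ?_
  · rw [card_pair hxjk] at hi
    exact eq_zero_of_sum_mul_sq_eq_zero hdH hvH (hdpos i hi)
  · rcases mem_insert.1 ht with rfl | ht
    · rw [← hPv]; exact eq_zero_of_sum_mul_sq_eq_zero hw hvW hwj
    · rw [mem_singleton.1 ht, ← hPv]; exact eq_zero_of_sum_mul_sq_eq_zero hw hvW hwk

/-- MMLS avoids the singular moment matrix: with `H = diag(0, 0, w̄₂, …, w̄_m)`
(`w̄_ν > 0` for `ν ≥ 2`), the modified moment matrix `Ā = Pᵀ W P + H` is positive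
definite as soon as there are two distinct nodes with positive weight. -/
theorem mmls_modified_moment_matrix_posDef
    (m N : ℕ) (hm : 2 ≤ m)
    (x : Fin N → ℝ) (w : Fin N → ℝ) (hw : ∀ j, 0 ≤ w j)
    (P : Matrix (Fin N) (Fin (m + 1)) ℝ)
    (hP : ∀ (j : Fin N) (i : Fin (m + 1)), P j i = x j ^ (i : ℕ))
    (W : Matrix (Fin N) (Fin N) ℝ) (hW : W = Matrix.diagonal w)
    (dH : Fin (m + 1) → ℝ)
    (hd0 : ∀ i : Fin (m + 1), (i : ℕ) < 2 → dH i = 0)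
    (hdpos : ∀ i : Fin (m + 1), 2 ≤ (i : ℕ) → 0 < dH i)
    (H : Matrix (Fin (m + 1)) (Fin (m + 1)) ℝ) (hH : H = Matrix.diagonal dH)
    (hjk : ∃ j k : Fin N, j ≠ k ∧ 0 < w j ∧ 0 < w k ∧ x j ≠ x k) :
    (Pᵀ * W * P + H).PosDef :=
  mmls_modified_moment_matrix_posDef_general m N x w hw P hP W hW dH hd0 hdpos H hH hjk
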